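/- Let alpha denote the binary digit sum and define mu(n) = min{ l >= 1 : alpha(n+l) <= l }. For every integer s > 2, mu(2^{s+3} + 2^{s+1} - 5) = 5. -/

import Mathlib

def alpha (n : ℕ) : ℕ := (Nat.digits 2 n).sum

noncomputable def mu (n : ℕ) : ℕ := sInf {l : ℕ | 1 ≤ l ∧ alpha (n + l) ≤ l}

/-
Write `n + j = 2^(s+3) + (2^(s+1) - 5 + j)` for `n = 2^(s+3) + 2^(s+1) - 5`, so that
`alpha (n + j) = alpha (2^(s+1) - 5 + j) + 1`. For `j = 1, …, 5` the inner numbers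
`2^(s+1) - 4, …, 2^(s+1)` are blocks of ones up to a few trailing bits, with digit sums
`s - 1, s, s, s + 1, 1`. Hence `alpha (n + j) > j` for `j ≤ 4` once `s ≥ 3`, while `alpha (n + 5) = 2`.
-/

@[simp]
lemma alpha_zero : alpha 0 = 0 := rfl

@[simp]
lemma alpha_one : alpha 1 = 1 := rfl

lemma alpha_two_mul_add {r : ℕ} (m : ℕ) (hr : r < 2) : alpha (2 * m + r) = alpha m + r := by
  rcases Nat.eq_zero_or_pos (m + r) with h | h
  · obtain ⟨rfl, rfl⟩ : m = 0 ∧ r = 0 := by omega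
    rfl
  · rw [alpha, add_comm, Nat.digits_add 2 (by norm_num) r m hr (by omega), List.sum_cons, alpha,
      add_comm]

lemma alpha_two_pow_mul_add (k a : ℕ) {b : ℕ} (hb : b < 2 ^ k) :
    alpha (2 ^ k * a + b) = alpha a + alpha b := by
  induction k generalizing b with
  | zero => simp [Nat.lt_one_iff.mp hb]
  | succ k ih =>
    have hb' : b / 2 < 2 ^ k := by rw [pow_succ] at hb; omega
    have hsplit : 2 ^ (k + 1) * a + b = 2 * (2 ^ k * a + b / 2) + b % 2 := by
      rw [pow_succ', mul_assoc]; omega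
    conv_rhs => rw [← Nat.div_add_mod b 2, alpha_two_mul_add _ (Nat.mod_lt b two_pos)]
    rw [hsplit, alpha_two_mul_add _ (Nat.mod_lt b two_pos), ih hb', add_assoc]

lemma alpha_two_pow_mul (k a : ℕ) : alpha (2 ^ k * a) = alpha a := by
  simpa using alpha_two_pow_mul_add k a (Nat.two_pow_pos k)

lemma alpha_two_pow_add (k : ℕ) {b : ℕ} (hb : b < 2 ^ k) : alpha (2 ^ k + b) = alpha b + 1 := by
  simpa [add_comm] using alpha_two_pow_mul_add k 1 hb

lemma alpha_two_pow (k : ℕ) : alpha (2 ^ k) = 1 := by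
  simpa using alpha_two_pow_mul k 1

lemma alpha_two_pow_sub_one (k : ℕ) : alpha (2 ^ k - 1) = k := by
  induction k with
  | zero => rfl
  | succ k ih =>
    have h : 2 ^ (k + 1) - 1 = 2 * (2 ^ k - 1) + 1 := by
      have := Nat.one_le_two_pow (n := k); rw [pow_succ]; omega
    rw [h, alpha_two_mul_add _ one_lt_two, ih]

lemma alpha_two_pow_sub_two_pow {i k : ℕ} (hik : i ≤ k) : alpha (2 ^ k - 2 ^ i) = k - i := by
  have h : 2 ^ k - 2 ^ i = 2 ^ i * (2 ^ (k - i) - 1) := by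
    rw [Nat.mul_sub_one, ← pow_add, Nat.add_sub_cancel' hik]
  rw [h, alpha_two_pow_mul, alpha_two_pow_sub_one]

lemma mu_eq {n l : ℕ} (hl : 1 ≤ l) (hle : alpha (n + l) ≤ l)
    (hlt : ∀ j, 1 ≤ j → j < l → j < alpha (n + j)) : mu n = l := by
  have hmem : l ∈ {l : ℕ | 1 ≤ l ∧ alpha (n + l) ≤ l} := ⟨hl, hle⟩
  refine le_antisymm (Nat.sInf_le hmem) (le_csInf ⟨l, hmem⟩ fun j ⟨hj, hje⟩ => ?_)
  by_contra! hjl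
  exact (hlt j hj hjl).not_ge hje

theorem mu_generic_degree (s : ℕ) (hs : 2 < s) :
    mu (2 ^ (s + 3) + 2 ^ (s + 1) - 5) = 5 := by
  have h16 : 2 ^ 4 ≤ 2 ^ (s + 1) := Nat.pow_le_pow_right two_pos (by omega)
  have h4 : 2 ^ (s + 3) = 4 * 2 ^ (s + 1) := by ring
  have hshift : ∀ j ≤ 5,
      alpha (2 ^ (s + 3) + 2 ^ (s + 1) - 5 + j) = alpha (2 ^ (s + 1) - (5 - j)) + 1 := by
    intro j hj
    rw [← alpha_two_pow_add (s + 3) (by omega)]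
    congr 1
    omega
  have hthree : alpha (2 ^ (s + 1) - 3) = s := by
    have h : 2 ^ (s + 1) - 3 = 2 * (2 ^ s - 2 ^ 1) + 1 := by rw [pow_succ] at h16 ⊢; omega
    rw [h, alpha_two_mul_add _ one_lt_two, alpha_two_pow_sub_two_pow (by omega)]
    omega
  apply mu_eq (by norm_num)
  · rw [hshift 5 le_rfl, Nat.sub_self, Nat.sub_zero, alpha_two_pow]
    norm_num
  · intro j hj1 hj5
    rw [hshift j (by omega)]
    interval_cases j
    · rw [show 5 - 1 = 2 ^ 2 from rfl, alpha_two_pow_sub_two_pow (by omega)]; omega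
    · rw [show 5 - 2 = 3 from rfl, hthree]; omega
    · rw [show 5 - 3 = 2 ^ 1 from rfl, alpha_two_pow_sub_two_pow (by omega)]; omega
    · rw [show 5 - 4 = 1 from rfl, alpha_two_pow_sub_one]; omega
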